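/- If a finite word W is rich (has exactly |W|+1 distinct palindromic factors), then every factor of W is rich. -/
import Mathlib


open List

variable {α : Type*} [DecidableEq α]

/-- The set of factors (contiguous subwords) of `W`. -/
def factorFinset (W : List α) : Finset (List α) := (W.inits.flatMap List.tails).toFinset

/-- A palindrome is a word equal to its reversal. -/
def Pal (u : List α) : Prop := u.reverse = u

instance : DecidablePred (Pal : List α → Prop) :=
  fun u => inferInstanceAs (Decidable (u.reverse = u))

/-- The set of palindromic factors of `W` (including the empty word). -/
def palFactorFinset (W : List α) : Finset (List α) := (factorFinset W).filter Pal

/-- Subword complexity: the number of distinct factors of `W` of length `n`. -/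
def C (W : List α) (n : ℕ) : ℕ := ((factorFinset W).filter (fun u => u.length = n)).card

/-- Palindromic complexity: number of distinct palindromic factors of `W` of length `n`. -/
def P (W : List α) (n : ℕ) : ℕ := ((palFactorFinset W).filter (fun u => u.length = n)).card

/-- A word is rich if it has exactly `|W| + 1` distinct palindromic factors. -/
def Rich (W : List α) : Prop := (palFactorFinset W).card = W.length + 1

/-- Number of occurrences of `u` as a factor of `W`. -/
def occ (u W : List α) : ℕ := ((List.range (W.length + 1)).filter (fun i => u <+: W.drop i)).length

/-- `Z` is a complete return to `u` in `W`: a factor of `W` with exactly two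
occurrences of `u`, one as a prefix and one as a suffix. -/
def CompleteReturn (u Z W : List α) : Prop := Z <:+: W ∧ u <+: Z ∧ u <:+ Z ∧ occ u Z = 2

/-- `u` is a right special factor of `W`. -/
def RightSpecial (u W : List α) : Prop :=
  ∃ x y : α, x ≠ y ∧ (u ++ [x]) <:+: W ∧ (u ++ [y]) <:+: W

/-- `R_W`: the smallest `p` such that `W` has no right special factor of length `p`. -/
noncomputable def RW (W : List α) : ℕ := sInf {p : ℕ | ∀ u : List α, u.length = p → ¬ RightSpecial u W}

/-- `K_W`: the length of the shortest suffix of `W` occurring exactly once in `W`. -/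
noncomputable def KW (W : List α) : ℕ := sInf {k : ℕ | ∃ u : List α, u <:+ W ∧ u.length = k ∧ occ u W = 1}

/-- A word is trapezoidal if `|W| = R_W + K_W`. -/
def Trapezoidal (W : List α) : Prop := W.length = RW W + KW W

/-- The minimal period of `W`. -/
noncomputable def minPeriod (W : List α) : ℕ :=
  sInf {q : ℕ | 0 < q ∧ ∀ i : ℕ, i + q < W.length → W[i]? = W[i + q]?}

/-- A binary word is balanced if the number of occurrences of a letter in two
factors of equal length differ by at most 1. -/
def BalancedWord (W : List Bool) : Prop :=
  ∀ u v : List Bool, u <:+: W → v <:+: W → u.length = v.length →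
    u.count true ≤ v.count true + 1

/- Auxiliary lemmas -/

lemma mem_factorFinset {u W : List α} : u ∈ factorFinset W ↔ u <:+: W := by
  simp only [factorFinset, List.mem_toFinset, List.mem_flatMap, List.mem_inits,
    List.mem_tails]
  rw [List.infix_iff_suffix_prefix]
  constructor
  · rintro ⟨t, ht, hu⟩; exact ⟨t, hu, ht⟩
  · rintro ⟨t, h1, h2⟩; exact ⟨t, h2, h1⟩

lemma mem_palFactorFinset {u W : List α} :
    u ∈ palFactorFinset W ↔ u <:+: W ∧ Pal u := by
  simp [palFactorFinset, Finset.mem_filter, mem_factorFinset]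

lemma palFactorFinset_mono {u W : List α} (h : u <:+: W) :
    palFactorFinset u ⊆ palFactorFinset W := by
  intro v hv
  rw [mem_palFactorFinset] at hv ⊢
  exact ⟨hv.1.trans h, hv.2⟩

lemma infix_append_singleton {P W : List α} {a : α} (h : P <:+: W ++ [a]) :
    P <:+: W ∨ P <:+ W ++ [a] := by
  obtain ⟨s, t, e⟩ := h
  cases t with
  | nil => right; exact ⟨s, by simpa using e⟩
  | cons b t' =>
    left
    have hpre : s ++ P <+: W ++ [a] := ⟨b :: t', e⟩
    have hlen : (s ++ P).length ≤ W.length := by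
      have e' := congrArg List.length e
      simp at e' ⊢
      omega
    have : s ++ P <+: W :=
      List.prefix_of_prefix_length_le hpre (W.prefix_append [a]) (by simpa using hlen)
    obtain ⟨r, hr⟩ := this
    exact ⟨s, r, by rw [← hr]⟩

/-- Key step: appending a letter adds at most one new palindromic factor. -/
lemma card_palFactorFinset_append_singleton (W : List α) (a : α) :
    (palFactorFinset (W ++ [a])).card ≤ (palFactorFinset W).card + 1 := by
  classical
  set S := palFactorFinset (W ++ [a]) \ palFactorFinset W with hS
  -- every element of S is a palindromic suffix of W ++ [a] that is not a factor of W
  have hSmem : ∀ P ∈ S, P <:+ (W ++ [a]) ∧ Pal P ∧ ¬ P <:+: W := by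
    intro P hP
    rw [hS, Finset.mem_sdiff, mem_palFactorFinset, mem_palFactorFinset] at hP
    obtain ⟨⟨h1, h2⟩, h3⟩ := hP
    have hnW : ¬ P <:+: W := fun hc => h3 ⟨hc, h2⟩
    rcases infix_append_singleton h1 with hc | hc
    · exact absurd hc hnW
    · exact ⟨hc, h2, hnW⟩
  -- If P Q ∈ S with |P| ≤ |Q| then P = Q
  have key : ∀ P ∈ S, ∀ Q ∈ S, P.length ≤ Q.length → P = Q := by
    intro P hP Q hQ hlen
    obtain ⟨hPsuf, hPpal, hPnW⟩ := hSmem P hP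
    obtain ⟨hQsuf, hQpal, hQnW⟩ := hSmem Q hQ
    rcases eq_or_lt_of_le hlen with heq | hlt
    · exact (List.suffix_of_suffix_length_le hPsuf hQsuf hlen).eq_of_length heq
    · exfalso
      have hPQ : P <:+ Q := List.suffix_of_suffix_length_le hPsuf hQsuf hlen
      have hPQ' : P <+: Q := by
        have := hPQ.reverse
        rwa [hPpal, hQpal] at this
      obtain ⟨r, hr⟩ := hPQ'
      obtain ⟨s, hs⟩ := hQsuf
      have hpre : s ++ P <+: W ++ [a] := by
        refine ⟨r, ?_⟩
        rw [List.append_assoc, hr, hs]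
      have hlen2 : (s ++ P).length ≤ W.length := by
        have e1 := congrArg List.length hs
        have e2 := congrArg List.length hr
        simp only [List.length_append, List.length_singleton] at e1 e2
        simp only [List.length_append]
        omega
      have : s ++ P <+: W :=
        List.prefix_of_prefix_length_le hpre (W.prefix_append [a]) (by simpa using hlen2)
      obtain ⟨r', hr'⟩ := this
      exact hPnW ⟨s, r', by rw [← hr']⟩
  have hScard : S.card ≤ 1 := by
    apply Finset.card_le_one.2
    intro P hP Q hQ
    rcases le_total P.length Q.length with h | h
    · exact key P hP Q hQ h
    · exact (key Q hQ P hP h).symm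
  have hsub : palFactorFinset (W ++ [a]) ⊆ palFactorFinset W ∪ S := by
    intro v hv
    rw [Finset.mem_union, hS, Finset.mem_sdiff]
    by_cases hc : v ∈ palFactorFinset W
    · exact Or.inl hc
    · exact Or.inr ⟨hv, hc⟩
  calc (palFactorFinset (W ++ [a])).card ≤ (palFactorFinset W ∪ S).card :=
        Finset.card_le_card hsub
    _ ≤ (palFactorFinset W).card + S.card := Finset.card_union_le _ _
    _ ≤ (palFactorFinset W).card + 1 := by omega

lemma palFactorFinset_nil : palFactorFinset ([] : List α) = {[]} := by
  ext v
  simp [mem_palFactorFinset, Pal]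
  rintro rfl
  rfl

lemma rich_nil : Rich ([] : List α) := by
  simp [Rich, palFactorFinset_nil]

/-- The DJP bound: at most `|W| + 1` palindromic factors. -/
lemma card_palFactorFinset_le (W : List α) :
    (palFactorFinset W).card ≤ W.length + 1 := by
  induction W using List.reverseRecOn with
  | nil => simp [palFactorFinset_nil]
  | append_singleton W a ih =>
    have := card_palFactorFinset_append_singleton W a
    simp only [List.length_append, List.length_singleton]
    omega

lemma rich_of_rich_append_singleton {W : List α} {a : α} (h : Rich (W ++ [a])) :
    Rich W := by
  unfold Rich at h ⊢
  have h1 := card_palFactorFinset_append_singleton W a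
  have h2 := card_palFactorFinset_le W
  have h3 : (palFactorFinset W).card ≤ (palFactorFinset (W ++ [a])).card :=
    Finset.card_le_card (palFactorFinset_mono (W.prefix_append [a]).isInfix)
  simp only [List.length_append, List.length_singleton] at h
  omega

lemma rich_prefix {W : List α} (h : Rich W) : ∀ u : List α, u <+: W → Rich u := by
  induction W using List.reverseRecOn with
  | nil =>
    intro u hu
    rw [List.prefix_nil.mp hu]
    exact rich_nil
  | append_singleton W a ih =>
    intro u hu
    rcases eq_or_lt_of_le (hu.length_le) with heq | hlt
    · rw [hu.eq_of_length heq]; exact h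
    · have hlen : u.length ≤ W.length := by
        simp only [List.length_append, List.length_singleton] at hlt
        omega
      have hu' : u <+: W :=
        List.prefix_of_prefix_length_le hu (W.prefix_append [a]) hlen
      exact ih (rich_of_rich_append_singleton h) u hu'

lemma palFactorFinset_reverse (W : List α) :
    palFactorFinset W.reverse = palFactorFinset W := by
  ext u
  simp only [mem_palFactorFinset]
  constructor
  · rintro ⟨h1, h2⟩
    refine ⟨?_, h2⟩
    have := h1.reverse
    rwa [h2, List.reverse_reverse] at this
  · rintro ⟨h1, h2⟩
    refine ⟨?_, h2⟩
    have := h1.reverse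
    rwa [h2] at this

lemma rich_reverse {W : List α} (h : Rich W) : Rich W.reverse := by
  unfold Rich at h ⊢
  rw [palFactorFinset_reverse, List.length_reverse]
  exact h

lemma rich_suffix {W u : List α} (h : Rich W) (hu : u <:+ W) : Rich u := by
  have h1 : u.reverse <+: W.reverse := hu.reverse
  have h2 : Rich u.reverse := rich_prefix (rich_reverse h) _ h1
  have := rich_reverse h2
  rwa [List.reverse_reverse] at this

theorem stmt1 {α : Type*} [DecidableEq α] (W u : List α) (h : Rich W) (hu : u <:+: W) :
    Rich u := by
  rw [List.infix_iff_prefix_suffix] at hu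
  obtain ⟨t, h1, h2⟩ := hu
  exact rich_prefix (rich_suffix h h2) u h1
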